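/- arXiv:1404.3319 — 2 statements merged into one kernel-verified Lean document; each statement's English description precedes it below -/
import Mathlib

section
/- Let I be an ideal of C and let t be a positive integer. If a^t ∈ IR*, then a^t ∈ I. -/
set_option synthInstance.maxHeartbeats 1000000
set_option maxHeartbeats 1000000
noncomputable section
namespace HRWGen

variable (R : Type) [CommRing R] [IsDomain R] [IsNoetherianRing R] (a : R)

/-- `R* `, the `(a)`-adic completion of `R`. -/
abbrev RstarG := AdicCompletion (Ideal.span {a}) R

/-- The image of `a` in `R*`. -/
def aS : RstarG R a := algebraMap R (RstarG R a) a

variable {h : ℕ} (cc : Fin h → ℕ → R) (tau : Fin h → RstarG R a)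
  (taue : Fin h → ℕ → RstarG R a)

/-- `U_r = R[τ_{1r}, …, τ_{hr}]`. -/
def Ur (r : ℕ) : Subalgebra R (RstarG R a) :=
  Algebra.adjoin R (Set.range fun i => taue i r)

/-- `C_r = (1 + aU_r)^{-1} U_r`, realized inside `R*` by adjoining the inverses of the
elements `1 + a·u`, `u ∈ U_r` (all of which are units of the `(a)`-adically complete
ring `R*`). -/
def Cr (r : ℕ) : Subalgebra R (RstarG R a) :=
  Algebra.adjoin R ((Set.range fun i => taue i r) ∪
    {w | ∃ u ∈ Algebra.adjoin R (Set.range fun i => taue i r),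
      w * (1 + aS R a * u) = 1})

/-- `U = ∪_r U_r`. -/
def UU : Subalgebra R (RstarG R a) := ⨆ r, Ur R a taue r

/-- `C = ∪_r C_r`. -/
def CC : Subalgebra R (RstarG R a) := ⨆ r, Cr R a taue r

/-- The hypotheses: `a` is a nonzero nonunit, `h ≥ 1`, the `τ_i` are algebraically
independent over `R` (equivalently over `K`), `τ_{i0} = τ_i`, and the endpieces satisfy
`a^r τ_{ir} = τ_i - Σ_{j=1}^r c_{ij} a^j` (in particular `τ_i = Σ_{j≥1} c_{ij} a^j ∈ aR[[a]]`). -/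
structure SetupG (cc : Fin h → ℕ → R) (tau : Fin h → RstarG R a)
    (taue : Fin h → ℕ → RstarG R a) : Prop where
  hh : 0 < h
  ha0 : a ≠ 0
  hau : ¬ IsUnit a
  hind : AlgebraicIndependent R tau
  he0 : ∀ i, taue i 0 = tau i
  hrec : ∀ i r, aS R a ^ r * taue i r =
    tau i - algebraMap R (RstarG R a) (∑ j ∈ Finset.Icc 1 r, cc i j * a ^ j)

/-!
Write `a^t = Σ ηᵢ bᵢ` with `bᵢ ∈ I`, `ηᵢ ∈ R*`, and approximate `ηᵢ ≡ dᵢ (mod a^{t+1}R*)` with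
`dᵢ ∈ R` (`R` is dense in `R*`). Then `z = Σ dᵢ bᵢ ∈ I` and `a^t - z ∈ C ∩ a^{t+1}R*`.
The endpiece relation `τ_{ir} = a (τ_{i,r+1} + c_{i,r+1})` gives `C_r ⊆ R + a C_{r+1}`, hence
`C ⊆ R + a^n C`; together with `R ∩ a^n R* = a^n R` this yields `C ∩ a^n R* = a^n C`.
So `z = a^t (1 - a y)` with `y ∈ C`, and `1 - a y` is a unit of `C` because `C_r` is built by
inverting `1 + a U_r`. Hence `a^t ∈ I`.
-/

section Completion

open AdicCompletion

variable {R : Type} [CommRing R] {a : R}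

lemma mem_span_singleton_pow_smul_top_iff {M : Type*} [AddCommGroup M] [Module R M] {n : ℕ}
    {x : M} : x ∈ (Ideal.span {a} ^ n • ⊤ : Submodule R M) ↔ ∃ y, a ^ n • y = x := by
  simp [Ideal.span_singleton_pow, Submodule.ideal_span_singleton_smul,
    Submodule.mem_smul_pointwise_iff_exists]

lemma aS_pow_mul (n : ℕ) (y : RstarG R a) : aS R a ^ n * y = a ^ n • y := by
  rw [aS, ← map_pow, Algebra.smul_def]

lemma exists_eq_algebraMap_add_aS_pow_mul (x : RstarG R a) (n : ℕ) :
    ∃ c : R, ∃ y : RstarG R a, x = algebraMap R (RstarG R a) c + aS R a ^ n * y := by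
  obtain ⟨c, hc⟩ := Submodule.mkQ_surjective _ (eval _ R n x)
  have hker : x - algebraMap R (RstarG R a) c ∈ (Ideal.span {a} ^ n • ⊤ : Submodule R _) := by
    rw [pow_smul_top_eq_ker_eval (Submodule.fg_span_singleton a), LinearMap.mem_ker, map_sub,
      AdicCompletion.algebraMap_apply, Algebra.algebraMap_self, RingHom.id_apply, eval_of, hc,
      sub_self]
  obtain ⟨y, hy⟩ := mem_span_singleton_pow_smul_top_iff.mp hker
  exact ⟨c, y, by rw [aS_pow_mul, hy, add_sub_cancel]⟩

lemma pow_dvd_of_algebraMap_eq_aS_pow_mul {n : ℕ} {c : R} {y : RstarG R a}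
    (h : algebraMap R (RstarG R a) c = aS R a ^ n * y) : a ^ n ∣ c := by
  have hy : a ^ n • y ∈ (eval _ R n).ker :=
    pow_smul_top_le_ker_eval _ _ (mem_span_singleton_pow_smul_top_iff.mpr ⟨y, rfl⟩)
  rw [← aS_pow_mul, ← h, LinearMap.mem_ker, AdicCompletion.algebraMap_apply,
    Algebra.algebraMap_self, RingHom.id_apply, eval_of, Submodule.mkQ_apply,
    Submodule.Quotient.mk_eq_zero, mem_span_singleton_pow_smul_top_iff] at hy
  obtain ⟨d, hd⟩ := hy
  exact ⟨d, hd.symm⟩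

lemma isUnit_one_add_aS_mul (u : RstarG R a) : IsUnit (1 + aS R a * u) := by
  have := isAdicComplete_self (Ideal.span {a}) (Submodule.fg_span_singleton a)
  have ha : aS R a ∈ (⊥ : Ideal (RstarG R a)).jacobson :=
    IsAdicComplete.le_jacobson_bot _ (Ideal.mem_map_of_mem _ (Ideal.mem_span_singleton_self a))
  rw [add_comm]
  exact Ideal.mem_jacobson_bot.mp ha u

lemma aS_pow_mul_left_cancel [IsDomain R] [IsNoetherianRing R] (ha : a ≠ 0) (n : ℕ)
    {y z : RstarG R a} (h : aS R a ^ n * y = aS R a ^ n * z) : y = z := by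
  -- `R*` is flat over the Noetherian ring `R`
  have hreg : IsSMulRegular (RstarG R a) (a ^ n) :=
    Module.Flat.isSMulRegular_of_nonZeroDivisors (pow_mem (mem_nonZeroDivisors_of_ne_zero ha) n)
  exact hreg (by simpa only [aS_pow_mul] using h)

lemma exists_mem_add_aS_pow_mul_of_mem_map {A : Subalgebra R (RstarG R a)} {I : Ideal A}
    {x : RstarG R a} (hx : x ∈ I.map A.val.toRingHom) (n : ℕ) :
    ∃ z ∈ I, ∃ y : RstarG R a, x = z + aS R a ^ n * y := by
  induction hx using Submodule.span_induction with
  | mem x hx =>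
    obtain ⟨z, hz, rfl⟩ := hx
    exact ⟨z, hz, 0, by rw [mul_zero, add_zero]; rfl⟩
  | zero => exact ⟨0, zero_mem I, 0, by rw [mul_zero, add_zero]; rfl⟩
  | add x x' _ _ ih ih' =>
    obtain ⟨z, hz, y, rfl⟩ := ih
    obtain ⟨z', hz', y', rfl⟩ := ih'
    exact ⟨z + z', add_mem hz hz', y + y', by push_cast; ring⟩
  | smul η x _ ih =>
    obtain ⟨z, hz, y, rfl⟩ := ih
    obtain ⟨c, ρ, rfl⟩ := exists_eq_algebraMap_add_aS_pow_mul η n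
    refine ⟨algebraMap R A c * z, I.mul_mem_left _ hz,
      ρ * z + (algebraMap R _ c + aS R a ^ n * ρ) * y, ?_⟩
    rw [smul_eq_mul, Subalgebra.coe_mul, Subalgebra.coe_algebraMap]
    ring

end Completion

section AdjoinInv

variable (R : Type*) {B : Type*} [CommRing R] [CommRing B] [Algebra R B]

/-- `(1 + e R[s])⁻¹ R[s]`, realized inside `B`. -/
def adjoinInvOneAdd (s : Set B) (e : B) : Subalgebra R B :=
  Algebra.adjoin R (s ∪ {w | ∃ u ∈ Algebra.adjoin R s, w * (1 + e * u) = 1})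

variable {R} {s : Set B} {e : B}

lemma exists_eq_mul_of_mem_adjoinInvOneAdd (he : e ∈ Algebra.adjoin R s) {x : B}
    (hx : x ∈ adjoinInvOneAdd R s e) :
    ∃ u ∈ Algebra.adjoin R s, ∃ v ∈ Algebra.adjoin R s, ∃ w : B,
      w * (1 + e * v) = 1 ∧ x = u * w := by
  induction hx using Algebra.adjoin_induction with
  | mem x hx =>
    rcases hx with hx | ⟨u, hu, hw⟩
    · exact ⟨x, Algebra.subset_adjoin hx, 0, zero_mem _, 1, by ring, by ring⟩
    · exact ⟨1, one_mem _, u, hu, x, hw, (one_mul x).symm⟩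
  | algebraMap c =>
    exact ⟨algebraMap R B c, Subalgebra.algebraMap_mem _ _, 0, zero_mem _, 1, by ring, by ring⟩
  | add x y _ _ ihx ihy =>
    obtain ⟨u₁, hu₁, v₁, hv₁, w₁, hw₁, rfl⟩ := ihx
    obtain ⟨u₂, hu₂, v₂, hv₂, w₂, hw₂, rfl⟩ := ihy
    refine ⟨u₁ * (1 + e * v₂) + u₂ * (1 + e * v₁), ?_, v₁ + v₂ + e * (v₁ * v₂), ?_,
      w₁ * w₂, ?_, ?_⟩
    · exact add_mem (mul_mem hu₁ (add_mem (one_mem _) (mul_mem he hv₂)))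
        (mul_mem hu₂ (add_mem (one_mem _) (mul_mem he hv₁)))
    · exact add_mem (add_mem hv₁ hv₂) (mul_mem he (mul_mem hv₁ hv₂))
    · linear_combination (w₂ * (1 + e * v₂)) * hw₁ + hw₂
    · linear_combination (-(u₁ * w₁)) * hw₂ + (-(u₂ * w₂)) * hw₁
  | mul x y _ _ ihx ihy =>
    obtain ⟨u₁, hu₁, v₁, hv₁, w₁, hw₁, rfl⟩ := ihx
    obtain ⟨u₂, hu₂, v₂, hv₂, w₂, hw₂, rfl⟩ := ihy
    refine ⟨u₁ * u₂, mul_mem hu₁ hu₂, v₁ + v₂ + e * (v₁ * v₂), ?_, w₁ * w₂, ?_, by ring⟩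
    · exact add_mem (add_mem hv₁ hv₂) (mul_mem he (mul_mem hv₁ hv₂))
    · linear_combination (w₂ * (1 + e * v₂)) * hw₁ + hw₂

/-- Writing `x = u / (1 + e v)`, one has `(1 + e x)⁻¹ = (1 + e v) / (1 + e (u + v))`. -/
lemma exists_inv_mem_adjoinInvOneAdd (he : e ∈ Algebra.adjoin R s)
    (hunit : ∀ b : B, IsUnit (1 + e * b)) {x : B} (hx : x ∈ adjoinInvOneAdd R s e) :
    ∃ w ∈ adjoinInvOneAdd R s e, w * (1 + e * x) = 1 := by
  obtain ⟨u, hu, v, hv, w₁, hw₁, rfl⟩ := exists_eq_mul_of_mem_adjoinInvOneAdd he hx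
  obtain ⟨w₂, hw₂⟩ := (hunit (v + u)).exists_left_inv
  have hA : Algebra.adjoin R s ≤ adjoinInvOneAdd R s e :=
    Algebra.adjoin_mono Set.subset_union_left
  have hw₂mem : w₂ ∈ adjoinInvOneAdd R s e :=
    Algebra.subset_adjoin (Or.inr ⟨v + u, add_mem hv hu, hw₂⟩)
  refine ⟨(1 + e * v) * w₂, mul_mem (hA (add_mem (one_mem _) (mul_mem he hv))) hw₂mem, ?_⟩
  linear_combination (e * u * w₂) * hw₁ + hw₂

end AdjoinInv

section Endpieces

variable {R : Type} [CommRing R] {a : R} {h : ℕ} {cc : Fin h → ℕ → R}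
  {tau : Fin h → RstarG R a} {taue : Fin h → ℕ → RstarG R a}

lemma Ur_le_Cr (r : ℕ) : Ur R a taue r ≤ Cr R a taue r :=
  Algebra.adjoin_mono Set.subset_union_left

lemma Cr_le_CC (r : ℕ) : Cr R a taue r ≤ CC R a taue :=
  le_iSup (Cr R a taue) r

lemma exists_inv_mem_Cr {r : ℕ} {x : RstarG R a} (hx : x ∈ Cr R a taue r) :
    ∃ w ∈ Cr R a taue r, w * (1 + aS R a * x) = 1 :=
  exists_inv_mem_adjoinInvOneAdd (Subalgebra.algebraMap_mem _ a) isUnit_one_add_aS_mul hx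

variable [IsDomain R] [IsNoetherianRing R]

lemma taue_eq_aS_mul (hs : SetupG R a cc tau taue) (i : Fin h) (r : ℕ) :
    taue i r = aS R a * (taue i (r + 1) + algebraMap R (RstarG R a) (cc i (r + 1))) := by
  apply aS_pow_mul_left_cancel hs.ha0 r
  have hsum : ∑ j ∈ Finset.Icc 1 (r + 1), cc i j * a ^ j
      = ∑ j ∈ Finset.Icc 1 r, cc i j * a ^ j + cc i (r + 1) * a ^ (r + 1) :=
    Finset.sum_Icc_succ_top (by omega) _
  have hr := hs.hrec i r
  have hr₁ := hs.hrec i (r + 1)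
  rw [hsum, map_add, map_mul, map_pow, ← aS] at hr₁
  linear_combination hr - hr₁

lemma Ur_le_succ (hs : SetupG R a cc tau taue) (r : ℕ) :
    Ur R a taue r ≤ Ur R a taue (r + 1) := by
  refine Algebra.adjoin_le ?_
  rintro _ ⟨i, rfl⟩
  show taue i r ∈ Ur R a taue (r + 1)
  rw [taue_eq_aS_mul hs i r]
  exact mul_mem (Subalgebra.algebraMap_mem _ a)
    (add_mem (Algebra.subset_adjoin ⟨i, rfl⟩) (Subalgebra.algebraMap_mem _ _))

lemma Cr_le_succ (hs : SetupG R a cc tau taue) (r : ℕ) :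
    Cr R a taue r ≤ Cr R a taue (r + 1) := by
  refine Algebra.adjoin_le ?_
  rintro x (⟨i, rfl⟩ | ⟨u, hu, hw⟩)
  · exact Ur_le_Cr (r + 1) (Ur_le_succ hs r (Algebra.subset_adjoin ⟨i, rfl⟩))
  · exact Algebra.subset_adjoin (Or.inr ⟨u, Ur_le_succ hs r hu, hw⟩)

lemma mem_CC_iff (hs : SetupG R a cc tau taue) {x : RstarG R a} :
    x ∈ CC R a taue ↔ ∃ r, x ∈ Cr R a taue r := by
  rw [← SetLike.mem_coe, CC,
    Subalgebra.coe_iSup_of_directed (monotone_nat_of_le_succ (Cr_le_succ hs)).directed_le,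
    Set.mem_iUnion]
  rfl

lemma exists_inv_mem_CC (hs : SetupG R a cc tau taue) {x : RstarG R a}
    (hx : x ∈ CC R a taue) : ∃ w ∈ CC R a taue, w * (1 + aS R a * x) = 1 := by
  obtain ⟨r, hr⟩ := (mem_CC_iff hs).mp hx
  obtain ⟨w, hw, hwx⟩ := exists_inv_mem_Cr hr
  exact ⟨w, Cr_le_CC r hw, hwx⟩

lemma exists_eq_algebraMap_add_aS_mul_of_mem_Cr (hs : SetupG R a cc tau taue) {r : ℕ}
    {x : RstarG R a} (hx : x ∈ Cr R a taue r) :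
    ∃ c : R, ∃ y ∈ Cr R a taue (r + 1), x = algebraMap R (RstarG R a) c + aS R a * y := by
  induction hx using Algebra.adjoin_induction with
  | mem x hx =>
    rcases hx with ⟨i, rfl⟩ | ⟨u, hu, hw⟩
    · refine ⟨0, taue i (r + 1) + algebraMap R (RstarG R a) (cc i (r + 1)), ?_, ?_⟩
      · exact add_mem (Ur_le_Cr (r + 1) (Algebra.subset_adjoin ⟨i, rfl⟩))
          (Subalgebra.algebraMap_mem _ _)
      · rw [map_zero, zero_add]
        exact taue_eq_aS_mul hs i r
    · have hxC : x ∈ Cr R a taue (r + 1) :=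
        Cr_le_succ hs r (Algebra.subset_adjoin (Or.inr ⟨u, hu, hw⟩))
      have huC : u ∈ Cr R a taue (r + 1) := Cr_le_succ hs r (Ur_le_Cr r hu)
      refine ⟨1, -(u * x), neg_mem (mul_mem huC hxC), ?_⟩
      rw [map_one]
      linear_combination hw
  | algebraMap c => exact ⟨c, 0, zero_mem _, by rw [mul_zero, add_zero]⟩
  | add x y _ _ ihx ihy =>
    obtain ⟨c₁, y₁, hy₁, rfl⟩ := ihx
    obtain ⟨c₂, y₂, hy₂, rfl⟩ := ihy
    exact ⟨c₁ + c₂, y₁ + y₂, add_mem hy₁ hy₂, by rw [map_add]; ring⟩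
  | mul x y _ _ ihx ihy =>
    obtain ⟨c₁, y₁, hy₁, rfl⟩ := ihx
    obtain ⟨c₂, y₂, hy₂, rfl⟩ := ihy
    refine ⟨c₁ * c₂, algebraMap R _ c₁ * y₂ + algebraMap R _ c₂ * y₁ + aS R a * (y₁ * y₂),
      ?_, by rw [map_mul]; ring⟩
    have haC : aS R a ∈ Cr R a taue (r + 1) := Subalgebra.algebraMap_mem _ a
    exact add_mem (add_mem (mul_mem (Subalgebra.algebraMap_mem _ _) hy₂)
      (mul_mem (Subalgebra.algebraMap_mem _ _) hy₁)) (mul_mem haC (mul_mem hy₁ hy₂))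

lemma exists_eq_algebraMap_add_aS_pow_mul_of_mem_CC (hs : SetupG R a cc tau taue) (n : ℕ)
    {x : RstarG R a} (hx : x ∈ CC R a taue) :
    ∃ c : R, ∃ y ∈ CC R a taue, x = algebraMap R (RstarG R a) c + aS R a ^ n * y := by
  induction n with
  | zero => exact ⟨0, x, hx, by rw [map_zero, pow_zero, one_mul, zero_add]⟩
  | succ k ih =>
    obtain ⟨c, y, hy, rfl⟩ := ih
    obtain ⟨r, hr⟩ := (mem_CC_iff hs).mp hy
    obtain ⟨c', y', hy', rfl⟩ := exists_eq_algebraMap_add_aS_mul_of_mem_Cr hs hr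
    refine ⟨c + a ^ k * c', y', Cr_le_CC (r + 1) hy', ?_⟩
    rw [map_add, map_mul, map_pow, ← aS]
    ring

lemma exists_mem_CC_eq_aS_pow_mul (hs : SetupG R a cc tau taue) {n : ℕ} {x y : RstarG R a}
    (hx : x ∈ CC R a taue) (hxy : x = aS R a ^ n * y) :
    ∃ y' ∈ CC R a taue, x = aS R a ^ n * y' := by
  obtain ⟨c, y₁, hy₁, rfl⟩ := exists_eq_algebraMap_add_aS_pow_mul_of_mem_CC hs n hx
  obtain ⟨d, rfl⟩ :=
    pow_dvd_of_algebraMap_eq_aS_pow_mul (y := y - y₁) (by linear_combination hxy)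
  refine ⟨algebraMap R _ d + y₁, add_mem (Subalgebra.algebraMap_mem _ d) hy₁, ?_⟩
  rw [map_mul, map_pow, ← aS]
  ring

end Endpieces

theorem statement6_general (R : Type) [CommRing R] [IsDomain R] [IsNoetherianRing R] (a : R)
    {h : ℕ} (cc : Fin h → ℕ → R) (tau : Fin h → RstarG R a)
    (taue : Fin h → ℕ → RstarG R a) (hs : SetupG R a cc tau taue)
    (I : Ideal ↥(CC R a taue)) (t : ℕ)
    -- if `a^t ∈ IR*` ...
    (hmem : aS R a ^ t ∈ Ideal.map ((CC R a taue).val).toRingHom I) :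
    -- ... then `a^t ∈ I`
    ∀ w : ↥(CC R a taue), (w : RstarG R a) = aS R a ^ t → w ∈ I := by
  intro w hw
  obtain ⟨z, hzI, y, hzy⟩ := exists_mem_add_aS_pow_mul_of_mem_map hmem (t + 1)
  obtain ⟨y', hy'C, hy'⟩ :=
    exists_mem_CC_eq_aS_pow_mul hs (n := t + 1) (y := y) (sub_mem w.2 z.2)
      (by rw [hw]; linear_combination hzy)
  obtain ⟨v, hvC, hv⟩ := exists_inv_mem_CC hs (neg_mem hy'C)
  -- `z = a^t (1 - a y')` and `v = (1 - a y')⁻¹`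
  have hwz : w = z * ⟨v, hvC⟩ := by
    apply Subtype.ext
    show (w : RstarG R a) = z * v
    linear_combination v * hy' - (aS R a * y' * v) * hw - w * hv
  rw [hwz]
  exact I.mul_mem_right _ hzI

theorem statement6 (R : Type) [CommRing R] [IsDomain R] [IsNoetherianRing R] (a : R)
    {h : ℕ} (cc : Fin h → ℕ → R) (tau : Fin h → RstarG R a)
    (taue : Fin h → ℕ → RstarG R a) (hs : SetupG R a cc tau taue)
    (I : Ideal ↥(CC R a taue)) (t : ℕ) (ht : 0 < t)
    -- if `a^t ∈ IR*` ...
    (hmem : aS R a ^ t ∈ Ideal.map ((CC R a taue).val).toRingHom I) :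
    -- ... then `a^t ∈ I`
    ∀ w : ↥(CC R a taue), (w : RstarG R a) = aS R a ^ t → w ∈ I :=
  statement6_general R a cc tau taue hs I t hmem

end HRWGen
end
end

section
/- Let S be a subring of a ring T and let b ∈ S be a nonzerodivisor of both S and T such that bS = bT ∩ S and the inclusion induces an isomorphism S/bS = T/bT. Then: (1) T[1/b] is flat over S if and only if T is flat over S; (2) if T and S[1/b] are both Noetherian and T is flat over S, then S is Noetherian. -/
/-!
The hypotheses say that `b` acts bijectively on `T/S`, and that `S/bS ≅ T/bT`.

(1) Flatness passes from `T` to its localization `T[1/b]`. Conversely, for an ideal `I` of `S`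
the kernel of `T ⊗ I → T` vanishes in `T[1/b] ⊗ I`, so it is `b`-power torsion. But `T ⊗ I` has
no `b`-torsion: an element killed by `b` maps to zero in `(T/S) ⊗ I`, on which `b` is invertible,
hence comes from `S ⊗ I = I`, and `I` embeds in `T`.

(2) An ideal `I` of `S` is determined by `IT` and `I S[1/b]`: if `x ∈ IT` and `bⁿx ∈ I`, the
cyclic module `N = S x̄ ⊆ S/I` has `T ⊗ N = 0` by flatness, so `N/bN = S/bS ⊗ N ≅ T/bT ⊗ N = 0`,
and `bⁿN = 0` forces `N = 0`. Hence ascending chains of ideals of `S` stabilize.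
-/

namespace HRW18

open TensorProduct LinearMap

variable {R T : Type*} [CommRing R] [CommRing T] [Algebra R T] {b : R}

theorem injective_mk_one_of_injective_algebraMap (hinj : Function.Injective (algebraMap R T))
    (I : Ideal R) : Function.Injective (TensorProduct.mk R T I 1) := by
  intro a c h
  have := congrArg (TensorProduct.rid R T ∘ lTensor T I.subtype) h
  simp only [Function.comp_apply, mk_apply, lTensor_tmul, Submodule.subtype_apply, rid_tmul,
    Algebra.smul_def, mul_one] at this
  exact Subtype.val_injective (hinj this)

theorem isSMulRegular_tensor_of_bijective_smul_quotient {M : Type*} [AddCommGroup M] [Module R M]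
    (hQ : Function.Bijective
      (DistribSMul.toLinearMap R (T ⧸ LinearMap.range (Algebra.linearMap R T)) b))
    (hM : IsSMulRegular M b) (h1 : Function.Injective (TensorProduct.mk R T M 1)) :
    IsSMulRegular (T ⊗[R] M) b := by
  set f := Algebra.linearMap R T
  refine (isSMulRegular_iff_right_eq_zero_of_smul (M := T ⊗[R] M)).mpr fun x hx => ?_
  have hQM : (range f).mkQ.rTensor M x = 0 := by
    apply ((LinearEquiv.ofBijective _ hQ).rTensor (R := R) M).injective
    change (DistribSMul.toLinearMap R _ b).rTensor M _ = _
    rw [map_zero, rTensor_smul_action, DistribSMul.toLinearMap_apply, ← map_smul, hx, map_zero]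
  obtain ⟨y, rfl⟩ := (rTensor_exact M f.exact_map_mkQ_range (range f).mkQ_surjective x).mp hQM
  obtain ⟨m, rfl⟩ := (TensorProduct.lid R M).symm.surjective y
  have hy : rTensor M f ((TensorProduct.lid R M).symm m) = TensorProduct.mk R T M 1 m := by
    simp [f]
  rw [hy] at hx ⊢
  rw [← map_smul] at hx
  rw [hM.right_eq_zero_of_smul (h1 (hx.trans (map_zero _).symm)), map_zero]

theorem flat_of_flat_localization (hinj : Function.Injective (algebraMap R T))
    (hbR : IsSMulRegular R b)
    (hQ : Function.Bijective
      (DistribSMul.toLinearMap R (T ⧸ LinearMap.range (Algebra.linearMap R T)) b))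
    (L : Type*) [CommRing L] [Algebra T L] [Algebra R L] [IsScalarTower R T L]
    [IsLocalization.Away (algebraMap R T b) L] [Module.Flat R L] : Module.Flat R T := by
  have : IsLocalization (Algebra.algebraMapSubmonoid T (Submonoid.powers b)) L := by
    rwa [Algebra.algebraMapSubmonoid, Submonoid.map_powers]
  set g := (IsScalarTower.toAlgHom R T L).toLinearMap
  refine Module.Flat.iff_lTensor_injective'.mpr fun I => (injective_iff_map_eq_zero _).mpr ?_
  intro x hx
  have hgx : AlgebraTensorModule.rTensor R I g x = 0 := by
    apply Module.Flat.lTensor_preserves_injective_linearMap (M := L) I.subtype I.injective_subtype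
    change lTensor L I.subtype (rTensor I g x) = lTensor L I.subtype 0
    rw [← comp_apply, lTensor_comp_rTensor, ← rTensor_comp_lTensor, comp_apply, hx, map_zero,
      map_zero]
  obtain ⟨⟨_, n, rfl⟩, hn⟩ :=
    (IsLocalizedModule.eq_zero_iff (Submonoid.powers b) (AlgebraTensorModule.rTensor R I g)).mp hgx
  have hreg : IsSMulRegular (T ⊗[R] I) b := isSMulRegular_tensor_of_bijective_smul_quotient hQ
    (hbR.submodule I) (injective_mk_one_of_injective_algebraMap hinj I)
  exact (hreg.pow n).right_eq_zero_of_smul hn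

theorem subsingleton_of_subsingleton_quotTensor {N : Type*} [AddCommGroup N] [Module R N]
    [Subsingleton ((R ⧸ Ideal.span {b}) ⊗[R] N)] {n : ℕ} (hN : ∀ m : N, b ^ n • m = 0) :
    Subsingleton N := by
  have htop : (Ideal.span {b} • ⊤ : Submodule R N) = ⊤ := by
    rw [← Submodule.Quotient.subsingleton_iff]
    exact (quotTensorEquivQuotSMul N _).symm.toEquiv.subsingleton
  have hpow : ∀ k : ℕ, (Ideal.span {b} ^ k • ⊤ : Submodule R N) = ⊤ := by
    intro k
    induction k with
    | zero => simp
    | succ k ih => rw [pow_succ, Submodule.mul_smul, htop, ih]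
  rw [← Submodule.subsingleton_iff R, ← subsingleton_iff_bot_eq_top, ← hpow n,
    Ideal.span_singleton_pow, eq_comm, eq_bot_iff, Submodule.smul_le]
  intro r hr m _
  obtain ⟨c, rfl⟩ := Ideal.mem_span_singleton'.mp hr
  rw [mul_smul, hN, smul_zero]
  exact Submodule.zero_mem _

section QuotientIso

variable (hker : RingHom.ker (algebraMap R (T ⧸ Ideal.span {algebraMap R T b})) = Ideal.span {b})
  (hsurj : Function.Surjective (algebraMap R (T ⧸ Ideal.span {algebraMap R T b})))
include hker hsurj

theorem bijective_smul_quotient_range (hbT : IsSMulRegular T b) :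
    Function.Bijective
      (DistribSMul.toLinearMap R (T ⧸ LinearMap.range (Algebra.linearMap R T)) b) := by
  constructor
  · rw [injective_iff_map_eq_zero]
    intro q hq
    obtain ⟨t, rfl⟩ := Submodule.mkQ_surjective _ q
    obtain ⟨r, hr⟩ : ∃ r, algebraMap R T r = b • t := by
      simpa [← Submodule.Quotient.mk_smul, Submodule.Quotient.mk_eq_zero] using hq
    have hrb : r ∈ Ideal.span {b} := by
      rw [← hker, RingHom.mem_ker, ← Ideal.Quotient.mk_algebraMap,
        Ideal.Quotient.eq_zero_iff_mem, hr, Algebra.smul_def]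
      exact Ideal.mul_mem_right _ _ (Ideal.mem_span_singleton_self _)
    obtain ⟨r', rfl⟩ := Ideal.mem_span_singleton'.mp hrb
    have ht : t = algebraMap R T r' := hbT (show b • t = b • _ by
      rw [← hr, Algebra.smul_def, map_mul, mul_comm])
    simp [ht, Submodule.Quotient.mk_eq_zero]
  · intro q
    obtain ⟨t, rfl⟩ := Submodule.mkQ_surjective _ q
    obtain ⟨r, hr⟩ := hsurj (Ideal.Quotient.mk _ t)
    rw [← Ideal.Quotient.mk_algebraMap, Ideal.Quotient.eq, Ideal.mem_span_singleton'] at hr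
    obtain ⟨u, hu⟩ := hr
    refine ⟨Submodule.mkQ _ (-u), ?_⟩
    simp only [DistribSMul.toLinearMap_apply, Submodule.mkQ_apply, ← Submodule.Quotient.mk_smul,
      Submodule.Quotient.eq]
    exact ⟨-r, by simp [Algebra.smul_def]; linear_combination hu⟩

theorem subsingleton_quotTensor_of_subsingleton_tensor {N : Type*} [AddCommGroup N] [Module R N]
    [Subsingleton (T ⊗[R] N)] : Subsingleton ((R ⧸ Ideal.span {b}) ⊗[R] N) := by
  let J := Ideal.span {algebraMap R T b}
  let e : (R ⧸ Ideal.span {b}) ≃ₐ[R] T ⧸ J :=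
    (Ideal.quotientEquivAlgOfEq R hker.symm).trans
      (Ideal.quotientKerAlgEquivOfSurjective (f := Algebra.ofId R (T ⧸ J)) hsurj)
  have : Subsingleton ((T ⧸ J) ⊗[R] N) :=
    (rTensor_surjective N (g := (Ideal.Quotient.mkₐ R J).toLinearMap)
      (Ideal.Quotient.mkₐ_surjective R J)).subsingleton
  exact (e.toLinearEquiv.rTensor N).toEquiv.subsingleton

theorem mem_of_algebraMap_mem_map_of_pow_mul_mem [Module.Flat R T] {I : Ideal R} {x : R}
    (hxT : algebraMap R T x ∈ I.map (algebraMap R T)) {n : ℕ} (hxb : b ^ n * x ∈ I) : x ∈ I := by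
  set N := Submodule.span R {Ideal.Quotient.mk I x}
  have hTx : ∀ t : T, t ⊗ₜ[R] Ideal.Quotient.mk I x = 0 := by
    intro t
    apply (tensorQuotEquivQuotSMul T I).injective
    rw [tensorQuotEquivQuotSMul_tmul_mk, map_zero, Submodule.Quotient.mk_eq_zero,
      Ideal.smul_top_eq_map, Submodule.restrictScalars_mem, Algebra.smul_def]
    exact Ideal.mul_mem_right _ _ hxT
  have hTN : Subsingleton (T ⊗[R] N) := by
    refine subsingleton_of_forall_eq 0 fun z => ?_
    apply Module.Flat.lTensor_preserves_injective_linearMap N.subtype N.injective_subtype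
    induction z using TensorProduct.induction_on with
    | zero => rfl
    | tmul t m =>
      obtain ⟨c, hc⟩ := Submodule.mem_span_singleton.mp m.2
      rw [lTensor_tmul, Submodule.subtype_apply, ← hc, tmul_smul, hTx, smul_zero, map_zero]
    | add z w hz hw => rw [map_add, hz, hw, map_zero, add_zero]
  have hbx : b ^ n • Ideal.Quotient.mk I x = 0 := by
    rw [Algebra.smul_def, Ideal.Quotient.algebraMap_eq, ← map_mul, Ideal.Quotient.eq_zero_iff_mem]
    exact hxb
  have hN : ∀ m : N, b ^ n • m = 0 := by
    rintro ⟨m, hm⟩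
    obtain ⟨c, rfl⟩ := Submodule.mem_span_singleton.mp hm
    apply Subtype.ext
    rw [Submodule.coe_smul, Submodule.coe_zero, smul_comm, hbx, smul_zero]
  have := subsingleton_quotTensor_of_subsingleton_tensor hker hsurj (N := N)
  have := subsingleton_of_subsingleton_quotTensor (b := b) (N := N) hN
  have hx : (⟨_, Submodule.mem_span_singleton_self _⟩ : N) = 0 := Subsingleton.elim _ _
  simpa [Ideal.Quotient.eq_zero_iff_mem] using congrArg Subtype.val hx

theorem comap_map_inf_comap_map_localization [Module.Flat R T] (I : Ideal R) :
    (I.map (algebraMap R T)).comap (algebraMap R T) ⊓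
      (I.map (algebraMap R (Localization.Away b))).comap (algebraMap R (Localization.Away b)) =
      I := by
  refine le_antisymm (fun x ⟨hxT, hxb⟩ => ?_) (le_inf Ideal.le_comap_map Ideal.le_comap_map)
  obtain ⟨_, ⟨n, rfl⟩, hn⟩ :=
    (IsLocalization.algebraMap_mem_map_algebraMap_iff (Submonoid.powers b) _ I x).mp hxb
  exact mem_of_algebraMap_mem_map_of_pow_mul_mem hker hsurj hxT hn

theorem isNoetherianRing_of_flat [Module.Flat R T] [IsNoetherianRing T]
    [IsNoetherianRing (Localization.Away b)] : IsNoetherianRing R := by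
  let f (I : Ideal R) : Ideal T × Ideal (Localization.Away b) :=
    (I.map (algebraMap R T), I.map (algebraMap R _))
  have hmono : Monotone f := fun I J h => ⟨Ideal.map_mono h, Ideal.map_mono h⟩
  have hinj : Function.Injective f := fun I J h => by
    simp only [f, Prod.mk.injEq] at h
    rw [← comap_map_inf_comap_map_localization hker hsurj I,
      ← comap_map_inf_comap_map_localization hker hsurj J, h.1, h.2]
  have := (hmono.strictMono_of_injective hinj).wellFoundedGT
  exact isNoetherianRing_iff.mpr (isNoetherian_iff'.mpr this)

end QuotientIso

theorem statement18 (T : Type) [CommRing T] (S : Subring T) (b : ↥S)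
    -- `b` is a nonzerodivisor of `S` and of `T`
    (hbS : b ∈ nonZeroDivisors ↥S) (hbT : (b : T) ∈ nonZeroDivisors T)
    -- `bS = bT ∩ S`
    (hcap : ∀ s : ↥S, ((s : T) ∈ Ideal.span {(b : T)}) ↔ s ∈ Ideal.span {b})
    -- the inclusion induces an isomorphism `S/bS = T/bT` (by `hcap`, the induced
    -- injective map is surjective)
    (hquot : Function.Surjective
      ((Ideal.Quotient.mk (Ideal.span {(b : T)})).comp S.subtype)) :
    -- (1) `T[1/b]` is flat over `S` iff `T` is flat over `S`
    (letI : Algebra ↥S T := S.subtype.toAlgebra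
     letI : Algebra ↥S (Localization.Away (b : T)) :=
       ((algebraMap T (Localization.Away (b : T))).comp S.subtype).toAlgebra
     (Module.Flat ↥S (Localization.Away (b : T)) ↔ Module.Flat ↥S T)) ∧
    -- (2) if `T` and `S[1/b]` are Noetherian and `T` is flat over `S`,
    --     then `S` is Noetherian
    (IsNoetherianRing T → IsNoetherianRing (Localization.Away b) →
      (letI : Algebra ↥S T := S.subtype.toAlgebra
       Module.Flat ↥S T) →
      IsNoetherianRing ↥S) := by
  let : Algebra S T := S.subtype.toAlgebra
  have hker : RingHom.ker (algebraMap S (T ⧸ Ideal.span {algebraMap S T b})) =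
      Ideal.span {b} := by
    ext s
    rw [RingHom.mem_ker, ← Ideal.Quotient.mk_algebraMap, Ideal.Quotient.eq_zero_iff_mem]
    exact hcap s
  have hsurj : Function.Surjective (algebraMap S (T ⧸ Ideal.span {algebraMap S T b})) := hquot
  refine ⟨⟨fun _ => ?_, fun _ => Module.Flat.trans S T (Localization.Away (b : T))⟩,
    fun _ _ _ => isNoetherianRing_of_flat hker hsurj⟩
  have hbS' : IsSMulRegular S b := fun x y h => (mul_cancel_left_mem_nonZeroDivisors hbS).mp h
  have hbT' : IsSMulRegular T b := fun x y h => (mul_cancel_left_mem_nonZeroDivisors hbT).mp h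
  have : IsLocalization.Away (algebraMap S T b) (Localization.Away (b : T)) :=
    Localization.isLocalization
  exact flat_of_flat_localization Subtype.val_injective hbS'
    (bijective_smul_quotient_range hker hsurj hbT') (Localization.Away (b : T))

end HRW18
end
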